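/- With E and Fᵢ as above, a point Y ∈ ℝ^m_{≥0} satisfies Yᵢ·Fᵢ(Y) = 0 for all i if and only if, after a permutation of indices, there exists k ∈ {0,1,...,m} such that Y₁,...,Y_k > 0 with F₁(Y)=...=F_k(Y)=0 and Y_{k+1}=...=Y_m=0; moreover for each fixed set θ of indices with positive coordinates there is exactly one such zero. -/

import Mathlib

/-!
On a zero with positive set `θ`, each equation `Fᵢ = 0` is a quadratic in `Yᵢ` whose
coefficients involve only `e = E(Y)`, and the bound `E ≥ nᵢ qᵢ² Yᵢ² ≥ qᵢ² Yᵢ²` rules out its larger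
root. Hence `Yᵢ = e / (pᵢ + √(pᵢ² − qᵢ² e))` on `θ`, and substituting into `E` gives the
self-consistency equation `ψ(e) = 1` with `ψ(e) = Σ_{i ∈ θ} nᵢ qᵢ² e / (pᵢ + √(pᵢ² − qᵢ² e))²`.
This `ψ` is continuous and strictly increasing on `[0, ∞)`, vanishes at `0` and is at least
`1` at `min_{i ∈ θ} pᵢ² / qᵢ²`, so the equation has exactly one solution, which yields
exactly one zero.
-/

open BigOperators

/-- E(Y) = Σᵢ nᵢ qᵢ² Yᵢ². -/
def flowE (m : ℕ) (n : Fin m → ℕ) (q : Fin m → ℝ) (Y : Fin m → ℝ) : ℝ :=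
  ∑ j, (n j : ℝ) * q j ^ 2 * Y j ^ 2

/-- Fᵢ(Y) = 2pᵢYᵢ − qᵢ²Yᵢ² − E(Y). -/
def flowF (m : ℕ) (n : Fin m → ℕ) (p q : Fin m → ℝ) (i : Fin m) (Y : Fin m → ℝ) : ℝ :=
  2 * p i * Y i - q i ^ 2 * Y i ^ 2 - flowE m n q Y

open Finset

theorem Fin.exists_perm_apply_iff_lt {m : ℕ} (P : Fin m → Prop) :
    ∃ σ : Equiv.Perm (Fin m), ∃ k ≤ m, ∀ i, P (σ i) ↔ (i : ℕ) < k := by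
  classical
  set a := Fintype.card {x // P x}
  set b := Fintype.card {x // ¬P x}
  have hab : a + b = m := by
    have := Fintype.card_subtype_compl P
    have := Fintype.card_subtype_le P
    simp only [Fintype.card_fin] at *
    omega
  let e : Fin (a + b) ≃ Fin m := finSumFinEquiv.symm.trans
    ((Equiv.sumCongr (Fintype.equivFin _).symm (Fintype.equivFin _).symm).trans
      (Equiv.sumCompl P))
  have he : ∀ j, P (e j) ↔ (j : ℕ) < a := by
    refine Fin.addCases (fun j => ?_) (fun j => ?_)
    · simpa [e] using ((Fintype.equivFin {x // P x}).symm j).2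
    · simpa [e] using ((Fintype.equivFin {x // ¬P x}).symm j).2
  exact ⟨(finCongr hab.symm).trans e, a, by omega, fun i => (he _).trans (by simp)⟩

theorem forall_mul_eq_zero_iff_exists_perm {m : ℕ} {Y F : Fin m → ℝ} (hY : ∀ i, 0 ≤ Y i) :
    (∀ i, Y i * F i = 0) ↔ ∃ (σ : Equiv.Perm (Fin m)) (k : ℕ), k ≤ m ∧
      (∀ i : Fin m, (i : ℕ) < k → 0 < Y (σ i) ∧ F (σ i) = 0) ∧
      (∀ i : Fin m, k ≤ (i : ℕ) → Y (σ i) = 0) := by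
  constructor
  · intro h
    obtain ⟨σ, k, hkm, hσ⟩ := Fin.exists_perm_apply_iff_lt (fun i => 0 < Y i)
    refine ⟨σ, k, hkm, fun i hi => ?_, fun i hi => ?_⟩
    · have hpos := (hσ i).2 hi
      exact ⟨hpos, (mul_eq_zero.1 (h _)).resolve_left hpos.ne'⟩
    · exact le_antisymm (not_lt.1 fun hpos => (not_lt.2 hi) ((hσ i).1 hpos)) (hY _)
  · rintro ⟨σ, k, -, hpos, hzero⟩ i
    obtain ⟨j, rfl⟩ := σ.surjective i
    rcases lt_or_ge (j : ℕ) k with hj | hj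
    · rw [(hpos j hj).2, mul_zero]
    · rw [hzero j hj, zero_mul]


/-- The root `(p - √(p² - a e)) / a` of `a x² - 2 p x + e = 0`, rationalized so that it stays
meaningful at `a = 0`. -/
noncomputable def smallRoot (p a e : ℝ) : ℝ :=
  e / (p + √(p ^ 2 - a * e))

noncomputable def rootRatio (p a e : ℝ) : ℝ :=
  e / (p + √(p ^ 2 - a * e)) ^ 2

section Scalar

variable {p a e : ℝ}

theorem sq_smallRoot : smallRoot p a e ^ 2 = e * rootRatio p a e := by
  rw [smallRoot, rootRatio, div_pow]
  ring

theorem smallRoot_pos (hp : 0 < p) (he : 0 < e) : 0 < smallRoot p a e :=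
  div_pos he (by positivity)

theorem smallRoot_isRoot (hp : 0 < p) (hae : a * e ≤ p ^ 2) :
    2 * p * smallRoot p a e - a * smallRoot p a e ^ 2 - e = 0 := by
  have hs := Real.sq_sqrt (sub_nonneg.2 hae)
  have hden : p + √(p ^ 2 - a * e) ≠ 0 := by positivity
  rw [smallRoot]
  generalize √(p ^ 2 - a * e) = s at hs hden
  field_simp
  linear_combination (-e) * hs

theorem eq_smallRoot {x : ℝ} (hp : 0 < p) (hx : 2 * p * x - a * x ^ 2 - e = 0)
    (hax : a * x ≤ p) : x = smallRoot p a e := by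
  have hs : √(p ^ 2 - a * e) = p - a * x := by
    rw [show p ^ 2 - a * e = (p - a * x) ^ 2 by linear_combination a * hx]
    exact Real.sqrt_sq (by linarith)
  rw [smallRoot, hs, eq_div_iff (by linarith)]
  linear_combination hx

theorem rootRatio_nonneg (hp : 0 < p) (he : 0 ≤ e) : 0 ≤ rootRatio p a e := by
  unfold rootRatio
  positivity

theorem rootRatio_of_mul_eq_sq (h : a * e = p ^ 2) : rootRatio p a e = e / p ^ 2 := by
  rw [rootRatio, h, sub_self, Real.sqrt_zero, add_zero]

theorem continuous_rootRatio (hp : 0 < p) : Continuous (rootRatio p a) :=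
  Continuous.div (by fun_prop) (by fun_prop) fun e => by positivity

theorem strictMonoOn_rootRatio (hp : 0 < p) (ha : 0 ≤ a) :
    StrictMonoOn (rootRatio p a) (Set.Ici 0) := by
  intro e₁ he₁ e₂ _ h
  have hs : √(p ^ 2 - a * e₂) ≤ √(p ^ 2 - a * e₁) :=
    Real.sqrt_le_sqrt (by nlinarith)
  calc rootRatio p a e₁ ≤ e₁ / (p + √(p ^ 2 - a * e₂)) ^ 2 := by
        unfold rootRatio
        gcongr
    _ < rootRatio p a e₂ := by
        unfold rootRatio
        gcongr

end Scalar

/-- `e * flowPsi n p q θ e` is `E` evaluated at the vector of smaller roots (`flowE_rootVector`),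
so the positive zeros on `θ` correspond to the solutions of `flowPsi n p q θ e = 1`. -/
noncomputable def flowPsi {ι : Type*} (n : ι → ℕ) (p q : ι → ℝ) (θ : Finset ι) (e : ℝ) : ℝ :=
  ∑ i ∈ θ, (n i : ℝ) * q i ^ 2 * rootRatio (p i) (q i ^ 2) e

section Psi

variable {ι : Type*} {n : ι → ℕ} {p q : ι → ℝ} {θ : Finset ι}

theorem flowPsi_zero : flowPsi n p q θ 0 = 0 := by
  simp [flowPsi, rootRatio]

theorem continuous_flowPsi (hp : ∀ i, 0 < p i) : Continuous (flowPsi n p q θ) :=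
  continuous_finsetSum _ fun i _ => (continuous_rootRatio (hp i)).const_mul _

theorem strictMonoOn_flowPsi (hθ : θ.Nonempty) (hn : ∀ i, 0 < n i) (hp : ∀ i, 0 < p i)
    (hq : ∀ i, q i ≠ 0) : StrictMonoOn (flowPsi n p q θ) (Set.Ici 0) := by
  intro e₁ he₁ e₂ he₂ h
  refine sum_lt_sum_of_nonempty hθ fun i _ => ?_
  have hc : (0 : ℝ) < n i * q i ^ 2 := by
    have := hn i
    have := hq i
    positivity
  exact mul_lt_mul_of_pos_left (strictMonoOn_rootRatio (hp i) (sq_nonneg _) he₁ he₂ h) hc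

theorem one_le_flowPsi {j : ι} (hj : j ∈ θ) (hn : ∀ i, 0 < n i) (hp : ∀ i, 0 < p i)
    (hq : ∀ i, q i ≠ 0) : 1 ≤ flowPsi n p q θ (p j ^ 2 / q j ^ 2) := by
  have hqj := hq j
  have hterm : (n j : ℝ) * q j ^ 2 * rootRatio (p j) (q j ^ 2) (p j ^ 2 / q j ^ 2) = n j := by
    have hpj := (hp j).ne'
    rw [rootRatio_of_mul_eq_sq (by field_simp)]
    field_simp
  calc (1 : ℝ) ≤ n j := by exact_mod_cast hn j
    _ = _ := hterm.symm
    _ ≤ flowPsi n p q θ (p j ^ 2 / q j ^ 2) :=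
      single_le_sum (f := fun i => (n i : ℝ) * q i ^ 2 * rootRatio (p i) (q i ^ 2) _)
        (fun i _ => mul_nonneg (by positivity) (rootRatio_nonneg (hp i) (by positivity))) hj

theorem exists_flowPsi_eq_one (hθ : θ.Nonempty) (hn : ∀ i, 0 < n i) (hp : ∀ i, 0 < p i)
    (hq : ∀ i, q i ≠ 0) :
    ∃ e, 0 < e ∧ (∀ i ∈ θ, q i ^ 2 * e ≤ p i ^ 2) ∧ flowPsi n p q θ e = 1 := by
  obtain ⟨j, hj, hmin⟩ := θ.exists_min_image (fun i => p i ^ 2 / q i ^ 2) hθ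
  obtain ⟨e, ⟨he₀, hej⟩, hψ⟩ := intermediate_value_Icc (by positivity)
    (continuous_flowPsi hp).continuousOn
    ⟨by simp [flowPsi_zero], one_le_flowPsi hj hn hp hq⟩
  refine ⟨e, he₀.lt_of_ne ?_, fun i hi => ?_, hψ⟩
  · rintro rfl
    simp [flowPsi_zero] at hψ
  · have hqi := hq i
    rw [← le_div_iff₀' (by positivity)]
    exact hej.trans (hmin i hi)

end Psi

section Zeros

variable {m : ℕ} {n : Fin m → ℕ} {p q : Fin m → ℝ} {θ : Finset (Fin m)}

def IsPositiveZeroOn (n : Fin m → ℕ) (p q : Fin m → ℝ) (θ : Finset (Fin m)) (Z : Fin m → ℝ) :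
    Prop :=
  (∀ i ∈ θ, 0 < Z i ∧ flowF m n p q i Z = 0) ∧ (∀ i ∉ θ, Z i = 0)

noncomputable def rootVector (p q : Fin m → ℝ) (θ : Finset (Fin m)) (e : ℝ) : Fin m → ℝ :=
  fun i => if i ∈ θ then smallRoot (p i) (q i ^ 2) e else 0

theorem flowE_rootVector (e : ℝ) :
    flowE m n q (rootVector p q θ e) = e * flowPsi n p q θ e := by
  rw [flowE, ← sum_subset (subset_univ θ) fun i _ hi => by simp [rootVector, hi], flowPsi,
    mul_sum]
  refine sum_congr rfl fun i hi => ?_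
  rw [rootVector, if_pos hi, sq_smallRoot]
  ring

theorem single_le_flowE (Y : Fin m → ℝ) (i : Fin m) :
    (n i : ℝ) * q i ^ 2 * Y i ^ 2 ≤ flowE m n q Y :=
  single_le_sum (f := fun j => (n j : ℝ) * q j ^ 2 * Y j ^ 2) (fun _ _ => by positivity)
    (mem_univ i)

namespace IsPositiveZeroOn

variable {Z : Fin m → ℝ}

theorem flowE_pos (hZ : IsPositiveZeroOn n p q θ Z) (hθ : θ.Nonempty) (hn : ∀ i, 0 < n i)
    (hq : ∀ i, q i ≠ 0) : 0 < flowE m n q Z := by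
  obtain ⟨j, hj⟩ := hθ
  have := hn j
  have := hq j
  have := (hZ.1 j hj).1
  exact lt_of_lt_of_le (by positivity) (single_le_flowE Z j)

theorem eq_rootVector (hZ : IsPositiveZeroOn n p q θ Z) (hn : ∀ i, 0 < n i)
    (hp : ∀ i, 0 < p i) : Z = rootVector p q θ (flowE m n q Z) := by
  funext i
  by_cases hi : i ∈ θ
  · obtain ⟨hZi, hFi⟩ := hZ.1 i hi
    rw [rootVector, if_pos hi]
    refine eq_smallRoot (hp i) hFi ?_
    have hE : q i ^ 2 * Z i ^ 2 ≤ flowE m n q Z := by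
      refine le_trans ?_ (single_le_flowE Z i)
      have hni : (1 : ℝ) ≤ n i := by exact_mod_cast hn i
      nlinarith [sq_nonneg (q i * Z i)]
    rw [flowF] at hFi
    nlinarith
  · rw [rootVector, if_neg hi, hZ.2 i hi]

theorem flowPsi_flowE (hZ : IsPositiveZeroOn n p q θ Z) (hθ : θ.Nonempty) (hn : ∀ i, 0 < n i)
    (hp : ∀ i, 0 < p i) (hq : ∀ i, q i ≠ 0) : flowPsi n p q θ (flowE m n q Z) = 1 := by
  have hE := congrArg (flowE m n q) (hZ.eq_rootVector hn hp)
  rw [flowE_rootVector] at hE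
  exact (mul_eq_left₀ (hZ.flowE_pos hθ hn hq).ne').1 hE.symm

theorem unique {W : Fin m → ℝ} (hZ : IsPositiveZeroOn n p q θ Z)
    (hW : IsPositiveZeroOn n p q θ W) (hn : ∀ i, 0 < n i) (hp : ∀ i, 0 < p i)
    (hq : ∀ i, q i ≠ 0) : Z = W := by
  rw [hZ.eq_rootVector hn hp, hW.eq_rootVector hn hp]
  rcases θ.eq_empty_or_nonempty with rfl | hθ
  · funext i
    simp [rootVector]
  · congr 1
    refine (strictMonoOn_flowPsi hθ hn hp hq).injOn (hZ.flowE_pos hθ hn hq).le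
      (hW.flowE_pos hθ hn hq).le ?_
    rw [hZ.flowPsi_flowE hθ hn hp hq, hW.flowPsi_flowE hθ hn hp hq]

end IsPositiveZeroOn

theorem exists_isPositiveZeroOn (θ : Finset (Fin m)) (hn : ∀ i, 0 < n i) (hp : ∀ i, 0 < p i)
    (hq : ∀ i, q i ≠ 0) : ∃ Z, IsPositiveZeroOn n p q θ Z := by
  rcases θ.eq_empty_or_nonempty with rfl | hθ
  · exact ⟨0, by simp [IsPositiveZeroOn]⟩
  obtain ⟨e, he, hdom, hψ⟩ := exists_flowPsi_eq_one hθ hn hp hq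
  have hE : flowE m n q (rootVector p q θ e) = e := by rw [flowE_rootVector, hψ, mul_one]
  refine ⟨rootVector p q θ e, fun i hi => ⟨?_, ?_⟩, fun i hi => by simp [rootVector, hi]⟩
  · simpa [rootVector, hi] using smallRoot_pos (a := q i ^ 2) (hp i) he
  · simpa [flowF, hE, rootVector, hi] using smallRoot_isRoot (hp i) (hdom i hi)

end Zeros

/-- characterization and uniqueness of zeros of G(Y)=(YᵢFᵢ(Y)). -/
theorem stmt5 (m : ℕ) (n : Fin m → ℕ) (p q : Fin m → ℝ)
    (hn : ∀ i, 0 < n i) (hp : ∀ i, 0 < p i) (hq : ∀ i, q i ≠ 0) :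
    (∀ Y : Fin m → ℝ, (∀ i, 0 ≤ Y i) →
      ((∀ i, Y i * flowF m n p q i Y = 0) ↔
        ∃ (σ : Equiv.Perm (Fin m)) (k : ℕ), k ≤ m ∧
          (∀ i : Fin m, (i : ℕ) < k → 0 < Y (σ i) ∧ flowF m n p q (σ i) Y = 0) ∧
          (∀ i : Fin m, k ≤ (i : ℕ) → Y (σ i) = 0))) ∧
    (∀ θ : Finset (Fin m), ∃! Z : Fin m → ℝ,
      (∀ i ∈ θ, 0 < Z i ∧ flowF m n p q i Z = 0) ∧ (∀ i ∉ θ, Z i = 0)) := by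
  refine ⟨fun Y hY => forall_mul_eq_zero_iff_exists_perm hY, fun θ => ?_⟩
  obtain ⟨Z, hZ⟩ := exists_isPositiveZeroOn θ hn hp hq
  exact ⟨Z, hZ, fun W hW => IsPositiveZeroOn.unique hW hZ hn hp hq⟩
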